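/- The fair coin problem achieves stochastic identification: there exists a test M (a function from finite binary sequences to {Fair, Unfair}) such that for every δ ∈ (0,1) and every θ ∈ [0,1], there exists N such that for all n ≥ N, the probability under the i.i.d. Bernoulli(θ) measure that M outputs the true hypothesis (Fair if θ = 1/2, Unfair otherwise) on a length-n sample exceeds 1 − δ. -/

import Mathlib

/-!
The test accepts fairness iff the sample frequency lies within `n ^ (-1/4)` of `1/2`.
The squared deviation of the number of ones from `nθ` has mean `nθ(1-θ) ≤ n/4`, because distinct
coordinates are uncorrelated; Markov's inequality then bounds the probability that the frequency
misses `θ` by at least `ε` by `1 / (4nε²)`. This tends to `0` whenever `nε² → ∞`: for `θ = 1/2`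
take the acceptance window `ε = n ^ (-1/4)` itself (`nε² = √n`); for `θ ≠ 1/2` take the fixed
`ε = |θ - 1/2| / 2`, and once the window is narrower than `ε` every frequency that close to `θ`
is rejected.
-/

open Classical in
/-- The probability, under i.i.d. Bernoulli(θ) sampling, that a length-`n` binary
sample satisfies the predicate `A`. -/
noncomputable def bernoulliPr (θ : ℝ) (n : ℕ) (A : (Fin n → Bool) → Prop) : ℝ :=
  ∑ s : Fin n → Bool, if A s then ∏ i, (if s i then θ else 1 - θ) else 0

open Finset Filter Topology

noncomputable def bernoulliWeight {n : ℕ} (θ : ℝ) (s : Fin n → Bool) : ℝ :=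
  ∏ i, if s i then θ else 1 - θ

noncomputable def bernoulliExpect (θ : ℝ) (n : ℕ) (f : (Fin n → Bool) → ℝ) : ℝ :=
  ∑ s : Fin n → Bool, bernoulliWeight θ s * f s

noncomputable def frequency (l : List Bool) : ℝ :=
  ((l.map Bool.toNat).sum : ℝ) / l.length

noncomputable def fairTest (l : List Bool) : Bool :=
  decide (|frequency l - 1 / 2| < (l.length : ℝ) ^ (-(1 / 4 : ℝ)))

lemma frequency_ofFn_sub {n : ℕ} (hn : 0 < n) (s : Fin n → Bool) (θ : ℝ) :
    frequency (List.ofFn s) - θ = (∑ i, ((s i).toNat - θ)) / n := by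
  simp [frequency, List.map_ofFn, List.sum_ofFn, sub_div, field]

section Bernoulli

variable {θ : ℝ} {n : ℕ}

lemma bernoulliExpect_prod (f : Fin n → Bool → ℝ) :
    bernoulliExpect θ n (fun s => ∏ i, f i (s i)) =
      ∏ i, (θ * f i true + (1 - θ) * f i false) := by
  simp only [bernoulliExpect, bernoulliWeight, ← prod_mul_distrib]
  exact (Fintype.prod_sum fun i b => (if b then θ else 1 - θ) * f i b).symm.trans (by simp)

lemma bernoulliExpect_one : bernoulliExpect θ n (fun _ => 1) = 1 := by
  simpa using bernoulliExpect_prod (θ := θ) (n := n) fun _ _ => 1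

lemma bernoulliExpect_apply (g : Bool → ℝ) (i : Fin n) :
    bernoulliExpect θ n (fun s => g (s i)) = θ * g true + (1 - θ) * g false := by
  classical
  have hprod (s : Fin n → Bool) : ∏ k, (if k = i then g else 1) (s k) = g (s i) := by
    rw [Fintype.prod_eq_single i fun k hk => by simp [hk]]; simp
  have := bernoulliExpect_prod (θ := θ) fun k => if k = i then g else 1
  simp only [hprod] at this
  rw [this, Fintype.prod_eq_single i fun k hk => by simp [hk]]
  simp

lemma bernoulliExpect_apply_mul_apply (g h : Bool → ℝ) {i j : Fin n} (hij : i ≠ j) :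
    bernoulliExpect θ n (fun s => g (s i) * h (s j)) =
      (θ * g true + (1 - θ) * g false) * (θ * h true + (1 - θ) * h false) := by
  classical
  have hprod (s : Fin n → Bool) :
      ∏ k, (if k = i then g else if k = j then h else 1) (s k) = g (s i) * h (s j) := by
    rw [Fintype.prod_eq_mul i j hij fun k hk => by simp [hk]]; simp [hij.symm]
  have := bernoulliExpect_prod (θ := θ) fun k => if k = i then g else if k = j then h else 1
  simp only [hprod] at this
  rw [this, Fintype.prod_eq_mul i j hij fun k hk => by simp [hk]]
  simp [hij.symm]

lemma bernoulliExpect_sum {ι : Type*} (t : Finset ι) (f : ι → (Fin n → Bool) → ℝ) :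
    bernoulliExpect θ n (fun s => ∑ k ∈ t, f k s) = ∑ k ∈ t, bernoulliExpect θ n (f k) := by
  simp only [bernoulliExpect, mul_sum]
  exact sum_comm

lemma bernoulliExpect_sq_sum_sub :
    bernoulliExpect θ n (fun s => (∑ i, ((s i).toNat - θ)) ^ 2) = n * (θ * (1 - θ)) := by
  have hcov (i j : Fin n) :
      bernoulliExpect θ n (fun s => ((s i).toNat - θ) * ((s j).toNat - θ)) =
        if i = j then θ * (1 - θ) else 0 := by
    split_ifs with hij
    · subst hij
      simp only [← sq]
      rw [bernoulliExpect_apply (fun b => ((b.toNat : ℝ) - θ) ^ 2)]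
      simp only [Bool.toNat_true, Bool.toNat_false, Nat.cast_one, Nat.cast_zero]; ring
    · refine (bernoulliExpect_apply_mul_apply (fun b => (b.toNat : ℝ) - θ)
        (fun b => (b.toNat : ℝ) - θ) hij).trans ?_
      simp only [Bool.toNat_true, Bool.toNat_false, Nat.cast_one, Nat.cast_zero]; ring
  simp only [sq, sum_mul_sum, bernoulliExpect_sum, hcov, sum_ite_eq, mem_univ, if_true,
    sum_const, card_univ, Fintype.card_fin, nsmul_eq_mul]

lemma bernoulliPr_not (A : (Fin n → Bool) → Prop) :
    bernoulliPr θ n (fun s => ¬ A s) = 1 - bernoulliPr θ n A := by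
  classical
  rw [← bernoulliExpect_one (θ := θ) (n := n), bernoulliExpect, bernoulliPr, bernoulliPr,
    ← sum_sub_distrib]
  refine sum_congr rfl fun s _ => ?_
  by_cases hA : A s <;> simp [hA, bernoulliWeight]

variable (hθ : θ ∈ Set.Icc 0 1)
include hθ

lemma bernoulliWeight_nonneg (s : Fin n → Bool) : 0 ≤ bernoulliWeight θ s :=
  prod_nonneg fun i _ => by split_ifs <;> linarith [hθ.1, hθ.2]

lemma bernoulliPr_nonneg (A : (Fin n → Bool) → Prop) : 0 ≤ bernoulliPr θ n A :=
  sum_nonneg fun s _ => by split_ifs; exacts [bernoulliWeight_nonneg hθ s, le_rfl]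

lemma bernoulliPr_le_one (A : (Fin n → Bool) → Prop) : bernoulliPr θ n A ≤ 1 := by
  have := bernoulliPr_not (θ := θ) fun s => ¬ A s
  simp only [not_not] at this
  linarith [bernoulliPr_nonneg hθ fun s => ¬ A s]

lemma bernoulliPr_mono {A B : (Fin n → Bool) → Prop} (h : ∀ s, A s → B s) :
    bernoulliPr θ n A ≤ bernoulliPr θ n B := by
  classical
  refine sum_le_sum fun s _ => ?_
  by_cases hA : A s
  · simp [hA, h s hA]
  · simp only [hA, if_false]
    split_ifs
    exacts [bernoulliWeight_nonneg hθ s, le_rfl]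

lemma bernoulliPr_le_bernoulliExpect_div {f : (Fin n → Bool) → ℝ} (hf : ∀ s, 0 ≤ f s)
    {t : ℝ} (ht : 0 < t) :
    bernoulliPr θ n (fun s => t ≤ f s) ≤ bernoulliExpect θ n f / t := by
  rw [bernoulliExpect, sum_div]
  refine sum_le_sum fun s _ => ?_
  have hw := bernoulliWeight_nonneg hθ s
  split_ifs with hs
  · rw [mul_div_assoc]
    exact le_mul_of_one_le_right hw ((one_le_div ht).2 hs)
  · exact div_nonneg (mul_nonneg hw (hf s)) ht.le

lemma bernoulliPr_le_abs_frequency_sub (hn : 0 < n) {ε : ℝ} (hε : 0 < ε) :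
    bernoulliPr θ n (fun s => ε ≤ |frequency (List.ofFn s) - θ|) ≤ 1 / (4 * n * ε ^ 2) := by
  have hn' : (0 : ℝ) < n := Nat.cast_pos.2 hn
  have hevent (s : Fin n → Bool) (hs : ε ≤ |frequency (List.ofFn s) - θ|) :
      (n * ε) ^ 2 ≤ (∑ i, ((s i).toNat - θ)) ^ 2 := by
    rw [frequency_ofFn_sub hn, abs_div, Nat.abs_cast, le_div_iff₀ hn', mul_comm] at hs
    rw [← sq_abs (∑ i, _)]
    exact pow_le_pow_left₀ (by positivity) hs 2
  have hvar : θ * (1 - θ) ≤ 1 / 4 := by nlinarith [sq_nonneg (θ - 1 / 2)]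
  calc bernoulliPr θ n (fun s => ε ≤ |frequency (List.ofFn s) - θ|)
      ≤ bernoulliPr θ n (fun s => (n * ε) ^ 2 ≤ (∑ i, ((s i).toNat - θ)) ^ 2) :=
        bernoulliPr_mono hθ hevent
    _ ≤ n * (θ * (1 - θ)) / (n * ε) ^ 2 := by
        rw [← bernoulliExpect_sq_sum_sub]
        exact bernoulliPr_le_bernoulliExpect_div hθ (fun s => sq_nonneg _) (by positivity)
    _ ≤ 1 / (4 * n * ε ^ 2) := by
        rw [div_le_div_iff₀ (by positivity) (by positivity)]
        nlinarith [mul_le_mul_of_nonneg_left hvar (by positivity : (0 : ℝ) ≤ n ^ 2 * ε ^ 2)]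

lemma tendsto_bernoulliPr_abs_frequency_sub_lt {ε : ℕ → ℝ} (hε : ∀ᶠ n in atTop, 0 < ε n)
    (h : Tendsto (fun n => n * ε n ^ 2) atTop atTop) :
    Tendsto (fun n => bernoulliPr θ n (fun s => |frequency (List.ofFn s) - θ| < ε n))
      atTop (𝓝 1) := by
  have hlower : Tendsto (fun n : ℕ => 1 - 1 / (4 * n * ε n ^ 2)) atTop (𝓝 1) := by
    simpa [mul_assoc] using
      tendsto_const_nhds.sub (h.const_mul_atTop four_pos).inv_tendsto_atTop
  refine tendsto_of_tendsto_of_tendsto_of_le_of_le' hlower tendsto_const_nhds ?_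
    (.of_forall fun n => bernoulliPr_le_one hθ _)
  filter_upwards [hε, eventually_gt_atTop 0] with n hεn hn
  simp_rw [← not_le]
  rw [bernoulliPr_not]
  linarith [bernoulliPr_le_abs_frequency_sub hθ hn hεn]

end Bernoulli

lemma mul_rpow_neg_one_fourth_sq {x : ℝ} (hx : 0 ≤ x) : x * (x ^ (-(1 / 4 : ℝ))) ^ 2 = √x := by
  rcases hx.eq_or_lt with rfl | hx
  · simp
  rw [← Real.rpow_natCast, ← Real.rpow_mul hx.le, Real.sqrt_eq_rpow,
    show (1 / 2 : ℝ) = 1 + -(1 / 4) * (2 : ℕ) by norm_num, Real.rpow_add hx, Real.rpow_one]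

lemma tendsto_bernoulliPr_fairTest_half :
    Tendsto (fun n => bernoulliPr (1 / 2) n (fun s => fairTest (List.ofFn s) = true))
      atTop (𝓝 1) := by
  have hpos : ∀ᶠ n : ℕ in atTop, 0 < (n : ℝ) ^ (-(1 / 4 : ℝ)) :=
    (eventually_gt_atTop 0).mono fun n hn => Real.rpow_pos_of_pos (Nat.cast_pos.2 hn) _
  have hrate : Tendsto (fun n : ℕ => (n : ℝ) * ((n : ℝ) ^ (-(1 / 4 : ℝ))) ^ 2) atTop atTop := by
    simp only [mul_rpow_neg_one_fourth_sq (Nat.cast_nonneg _)]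
    exact Real.tendsto_sqrt_atTop.comp tendsto_natCast_atTop_atTop
  simpa [fairTest] using
    tendsto_bernoulliPr_abs_frequency_sub_lt (by norm_num : (1 / 2 : ℝ) ∈ Set.Icc 0 1) hpos hrate

lemma tendsto_bernoulliPr_fairTest_of_ne_half {θ : ℝ} (hθ : θ ∈ Set.Icc 0 1) (hne : θ ≠ 1 / 2) :
    Tendsto (fun n => bernoulliPr θ n (fun s => fairTest (List.ofFn s) = false))
      atTop (𝓝 1) := by
  have hgap : 0 < |θ - 1 / 2| / 2 := half_pos (abs_pos.2 (sub_ne_zero.2 hne))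
  have hclose := tendsto_bernoulliPr_abs_frequency_sub_lt hθ (ε := fun _ => |θ - 1 / 2| / 2)
    (.of_forall fun _ => hgap) (tendsto_natCast_atTop_atTop.atTop_mul_const (pow_pos hgap 2))
  have hwindow : ∀ᶠ n : ℕ in atTop, (n : ℝ) ^ (-(1 / 4 : ℝ)) ≤ |θ - 1 / 2| / 2 :=
    ((tendsto_rpow_neg_atTop (by norm_num)).comp tendsto_natCast_atTop_atTop).eventually
      (eventually_le_nhds hgap)
  refine tendsto_of_tendsto_of_tendsto_of_le_of_le' hclose tendsto_const_nhds ?_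
    (.of_forall fun n => bernoulliPr_le_one hθ _)
  filter_upwards [hwindow] with n hn
  refine bernoulliPr_mono hθ fun s hs => ?_
  simp only [fairTest, List.length_ofFn, decide_eq_false_iff_not, not_lt]
  have htriangle := abs_sub_le θ (frequency (List.ofFn s)) (1 / 2)
  rw [abs_sub_comm θ (frequency _)] at htriangle
  linarith

open Classical in
/-- the fair coin problem achieves stochastic identification: some test
M : finite binary sequences → {Fair, Unfair} (true = Fair) is such that for every
δ ∈ (0,1) and every θ ∈ [0,1], eventually the probability that M outputs the true
hypothesis (Fair iff θ = 1/2) on a length-n sample exceeds 1 − δ. -/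
theorem fair_coin_stochastic_identification :
    ∃ M : List Bool → Bool,
      ∀ δ : ℝ, 0 < δ → δ < 1 →
        ∀ θ ∈ Set.Icc (0:ℝ) 1,
          ∃ N : ℕ, ∀ n ≥ N,
            1 - δ < bernoulliPr θ n
              (fun s => M (List.ofFn s) = (if θ = 1/2 then true else false)) := by
  refine ⟨fairTest, fun δ hδ _ θ hθ =>
    eventually_atTop.1 (Tendsto.eventually_const_lt (sub_lt_self 1 hδ) ?_)⟩
  by_cases h : θ = 1 / 2
  · subst h
    simpa only [if_true] using tendsto_bernoulliPr_fairTest_half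
  · simpa only [if_neg h] using tendsto_bernoulliPr_fairTest_of_ne_half hθ h
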